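/- Let K₀ ⊂ U(5) be the set of block-diagonal matrices diag(A, B, c) with A, B ∈ SU(2) and c a complex number of modulus one, and let g ∈ U(5) be the matrix determined by ge₁ = e₃, ge₂ = −e₄, ge₃ = e₁, ge₄ = e₂, ge₅ = e₅. Then (i) the subspace of w ∈ ⋀²ℂ⁵ satisfying (⋀²h)w = w for all h ∈ K₀ equals the 2-dimensional span of e₁∧e₂ and e₃∧e₄; (ii) (⋀²g)(e₁∧e₂) = −e₃∧e₄ and (⋀²g)(e₃∧e₄) = e₁∧e₂; consequently the subspace of w ∈ ⋀²ℂ⁵ fixed by all of K₀ and by ⋀²g is {0}. -/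

import Mathlib

/-!
The element `t = diag(i, -i, -1, -1, 1)` of `K₀` is diagonal in the standard basis, so `⋀²t` is
diagonal in the basis `eᵢ ∧ eⱼ` with eigenvalues `tᵢ tⱼ ∈ {±1, ±i}`; these equal `1` only for
`e₁ ∧ e₂` and `e₃ ∧ e₄`, so every `K₀`-fixed vector lies in their span. Conversely `diag(A, B, c)`
acts on `e₁ ∧ e₂` and `e₃ ∧ e₄` by `det A = 1` and `det B = 1`. On this plane `⋀²g` is the rotation
`a e₁∧e₂ + b e₃∧e₄ ↦ b e₁∧e₂ - a e₃∧e₄`, which fixes only `0`.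
-/

noncomputable section

abbrev Mat2 : Type := Matrix (Fin 2) (Fin 2) ℂ

/-- The special unitary group SU(2), as a set of matrices. -/
def SU2 : Set Mat2 := {A | A * A.conjTranspose = 1 ∧ A.det = 1}

/-- The block-diagonal matrix diag(A, B, c) ∈ U(5). -/
def bd5 (A B : Mat2) (c : ℂ) : Matrix (Fin 5) (Fin 5) ℂ :=
  !![A 0 0, A 0 1, 0, 0, 0;
     A 1 0, A 1 1, 0, 0, 0;
     0, 0, B 0 0, B 0 1, 0;
     0, 0, B 1 0, B 1 1, 0;
     0, 0, 0, 0, c]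

/-- The ℤ₄-generator g ∈ U(5): ge₁ = e₃, ge₂ = −e₄, ge₃ = e₁, ge₄ = e₂, ge₅ = e₅. -/
def g5 : Matrix (Fin 5) (Fin 5) ℂ :=
  !![0, 0, 1, 0, 0;
     0, 0, 0, 1, 0;
     1, 0, 0, 0, 0;
     0, -1, 0, 0, 0;
     0, 0, 0, 0, 1]

abbrev EA : Type := ExteriorAlgebra ℂ (Fin 5 → ℂ)

/-- The standard basis of ℂ⁵. -/
def eV (i : Fin 5) : Fin 5 → ℂ := Pi.single i 1

/-- The wedge x∧y ∈ ⋀²ℂ⁵ ⊂ ⋀ℂ⁵. -/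
def wedge (x y : Fin 5 → ℂ) : EA :=
  ExteriorAlgebra.ι ℂ x * ExteriorAlgebra.ι ℂ y

/-- The induced map ⋀h on the exterior algebra of ℂ⁵. -/
def extAct (h : Matrix (Fin 5) (Fin 5) ℂ) : EA →ₐ[ℂ] EA :=
  ExteriorAlgebra.map h.mulVecLin


open Module Set.powersetCard Matrix

theorem Module.Basis.repr_apply_eq_mul_of_apply_eq_smul {ι R M : Type*} [CommSemiring R]
    [AddCommMonoid M] [Module R M] (b : Basis ι R M) {f : M →ₗ[R] M} {μ : ι → R}
    (hf : ∀ i, f (b i) = μ i • b i) (x : M) (i : ι) :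
    b.repr (f x) i = μ i * b.repr x i := by
  have h : b.coord i ∘ₗ f = μ i • b.coord i :=
    b.ext fun j => by rcases eq_or_ne j i with rfl | _ <;> simp [*]
  exact LinearMap.congr_fun h x

theorem Module.Basis.mem_span_image_of_apply_eq_self {ι R M : Type*} [CommRing R] [IsDomain R]
    [AddCommGroup M] [Module R M] (b : Basis ι R M) {f : M →ₗ[R] M} {μ : ι → R}
    (hf : ∀ i, f (b i) = μ i • b i) {x : M} (hx : f x = x) :
    x ∈ Submodule.span R (b '' {i | μ i = 1}) := by
  rw [b.mem_span_image]
  intro i hi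
  have h := b.repr_apply_eq_mul_of_apply_eq_smul hf x i
  rw [hx] at h
  exact (mul_right_cancel₀ (Finsupp.mem_support_iff.mp hi) (by simpa using h)).symm

theorem ExteriorAlgebra.ι_mul_ι_eq_det_smul {R M : Type*} [CommRing R] [AddCommGroup M]
    [Module R M] (A : Matrix (Fin 2) (Fin 2) R) (x y : M) :
    ι R (A 0 0 • x + A 1 0 • y) * ι R (A 0 1 • x + A 1 1 • y) = A.det • (ι R x * ι R y) := by
  have hyx : ι R y * ι R x = -(ι R x * ι R y) :=
    eq_neg_of_add_eq_zero_right (ι_add_mul_swap x y)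
  simp only [map_add, map_smul, add_mul, mul_add, smul_mul_smul_comm, ι_sq_zero, hyx,
    det_fin_two]
  module

theorem Set.powersetCard.exists_eq_ofCard_pair {I : Type*} [LinearOrder I]
    (s : Set.powersetCard I 2) :
    ∃ i j : I, ∃ hij : i < j, s = ofCard (Finset.card_pair hij.ne) := by
  obtain ⟨i, j, hne, hs⟩ := Finset.card_eq_two.mp s.prop
  rcases hne.lt_or_gt with hij | hji
  · exact ⟨i, j, hij, Subtype.ext hs⟩
  · exact ⟨j, i, hji, Subtype.ext (hs.trans (Finset.pair_comm i j))⟩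

namespace exteriorPower

variable {R M N I : Type*} [CommRing R] [AddCommGroup M] [Module R M] [AddCommGroup N]
  [Module R N] {n : ℕ}

theorem coe_map_apply (f : M →ₗ[R] N) (x : ⋀[R]^n M) :
    (map n f x : ExteriorAlgebra R N) = ExteriorAlgebra.map f x := by
  have h : (⋀[R]^n N).subtype ∘ₗ map n f =
      (ExteriorAlgebra.map f).toLinearMap ∘ₗ (⋀[R]^n M).subtype :=
    linearMap_ext (by ext m; simp [ExteriorAlgebra.map_apply_ιMulti, Function.comp_def])
  exact LinearMap.congr_fun h x

variable [LinearOrder I]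

theorem map_basis_of_apply_eq_smul (b : Basis I R M) {f : M →ₗ[R] M} {μ : I → R}
    (hf : ∀ i, f (b i) = μ i • b i) (s : Set.powersetCard I n) :
    map n f (b.exteriorPower n s) = (∏ i ∈ s.val, μ i) • b.exteriorPower n s := by
  set σ := ofFinEmbEquiv.symm s
  have hprod : ∏ k, μ (σ k) = ∏ i ∈ s.val, μ i := by
    rw [← Finset.prod_coe_sort s.val]
    exact Fintype.prod_equiv (s.val.orderIsoOfFin s.prop).toEquiv (fun k => μ (σ k))
      (fun i : s.val => μ i) fun _ => rfl
  have h := (ιMulti R n).toMultilinearMap.map_smul_univ (fun k => μ (σ k)) (b ∘ σ)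
  rw [basis_apply, map_apply_ιMulti_family, ιMulti_family, ιMulti_family, ← hprod]
  simpa [Function.comp_def, hf] using h

theorem coe_basis_ofCard_pair (b : Basis I R M) {i j : I} (hij : i < j) :
    (b.exteriorPower 2 (ofCard (Finset.card_pair hij.ne)) : ExteriorAlgebra R M) =
      ExteriorAlgebra.ι R (b i) * ExteriorAlgebra.ι R (b j) := by
  have h : ![i, j] = Finset.orderEmbOfFin {i, j} (Finset.card_pair hij.ne) :=
    Finset.orderEmbOfFin_unique _ (by simp [Fin.forall_fin_two])
      (Fin.strictMono_iff_lt_succ.mpr (by simp [Fin.forall_fin_one, hij]))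
  rw [basis_apply, ιMulti_family_apply_coe]
  change ExteriorAlgebra.ιMulti R 2 (b ∘ Finset.orderEmbOfFin {i, j} _) = _
  rw [← h]
  simp [ExteriorAlgebra.ιMulti_apply, vecTail]

end exteriorPower

open exteriorPower

abbrev wedgeBasis : Basis (Set.powersetCard (Fin 5) 2) ℂ (⋀[ℂ]^2 (Fin 5 → ℂ)) :=
  (Pi.basisFun ℂ (Fin 5)).exteriorPower 2

abbrev spanWedge : Submodule ℂ EA :=
  Submodule.span ℂ {wedge (eV 0) (eV 1), wedge (eV 2) (eV 3)}

theorem wedge_eq_ιMulti (x y : Fin 5 → ℂ) :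
    wedge x y = ExteriorAlgebra.ιMulti ℂ 2 ![x, y] := by
  simp [wedge, ExteriorAlgebra.ιMulti_apply, vecTail]

theorem wedge_mem_exteriorPower (x y : Fin 5 → ℂ) : wedge x y ∈ ⋀[ℂ]^2 (Fin 5 → ℂ) :=
  wedge_eq_ιMulti x y ▸ ExteriorAlgebra.ιMulti_range ℂ 2 (Set.mem_range_self _)

theorem extAct_wedge (h : Matrix (Fin 5) (Fin 5) ℂ) (x y : Fin 5 → ℂ) :
    extAct h (wedge x y) = wedge (h *ᵥ x) (h *ᵥ y) := by
  simp [extAct, wedge]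

theorem extAct_bd5_wedge_eV_zero_one (A B : Mat2) (c : ℂ) :
    extAct (bd5 A B c) (wedge (eV 0) (eV 1)) = A.det • wedge (eV 0) (eV 1) := by
  have h₀ : bd5 A B c *ᵥ eV 0 = A 0 0 • eV 0 + A 1 0 • eV 1 := by
    ext k; fin_cases k <;> simp [bd5, eV]
  have h₁ : bd5 A B c *ᵥ eV 1 = A 0 1 • eV 0 + A 1 1 • eV 1 := by
    ext k; fin_cases k <;> simp [bd5, eV]
  rw [extAct_wedge, h₀, h₁]
  exact ExteriorAlgebra.ι_mul_ι_eq_det_smul A _ _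

theorem extAct_bd5_wedge_eV_two_three (A B : Mat2) (c : ℂ) :
    extAct (bd5 A B c) (wedge (eV 2) (eV 3)) = B.det • wedge (eV 2) (eV 3) := by
  have h₂ : bd5 A B c *ᵥ eV 2 = B 0 0 • eV 2 + B 1 0 • eV 3 := by
    ext k; fin_cases k <;> simp [bd5, eV]
  have h₃ : bd5 A B c *ᵥ eV 3 = B 0 1 • eV 2 + B 1 1 • eV 3 := by
    ext k; fin_cases k <;> simp [bd5, eV]
  rw [extAct_wedge, h₂, h₃]
  exact ExteriorAlgebra.ι_mul_ι_eq_det_smul B _ _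

theorem extAct_g5_wedge_eV_zero_one :
    extAct g5 (wedge (eV 0) (eV 1)) = -wedge (eV 2) (eV 3) := by
  have h₀ : g5 *ᵥ eV 0 = eV 2 := by ext k; fin_cases k <;> simp [g5, eV]
  have h₁ : g5 *ᵥ eV 1 = -eV 3 := by ext k; fin_cases k <;> simp [g5, eV]
  rw [extAct_wedge, h₀, h₁]
  simp [wedge]

theorem extAct_g5_wedge_eV_two_three :
    extAct g5 (wedge (eV 2) (eV 3)) = wedge (eV 0) (eV 1) := by
  have h₂ : g5 *ᵥ eV 2 = eV 0 := by ext k; fin_cases k <;> simp [g5, eV]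
  have h₃ : g5 *ᵥ eV 3 = eV 1 := by ext k; fin_cases k <;> simp [g5, eV]
  rw [extAct_wedge, h₂, h₃]

theorem spanWedge_le_exteriorPower : spanWedge ≤ ⋀[ℂ]^2 (Fin 5 → ℂ) :=
  Submodule.span_le.mpr (by simp [Set.insert_subset_iff, wedge_mem_exteriorPower])

theorem extAct_bd5_eq_self_of_mem_spanWedge {A B : Mat2} (c : ℂ) (hA : A.det = 1)
    (hB : B.det = 1) {w : EA} (hw : w ∈ spanWedge) : extAct (bd5 A B c) w = w := by
  have h : spanWedge ≤ LinearMap.eqLocus (extAct (bd5 A B c)).toLinearMap LinearMap.id :=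
    Submodule.span_le.mpr (by simp [Set.insert_subset_iff, extAct_bd5_wedge_eV_zero_one,
      extAct_bd5_wedge_eV_two_three, hA, hB])
  exact h hw

theorem coe_wedgeBasis_ofCard_pair {i j : Fin 5} (hij : i < j) :
    (wedgeBasis (ofCard (Finset.card_pair hij.ne)) : EA) = wedge (eV i) (eV j) := by
  rw [coe_basis_ofCard_pair _ hij, Pi.basisFun_apply, Pi.basisFun_apply]
  rfl

abbrev torusWeights : Fin 5 → ℂ := ![Complex.I, -Complex.I, -1, -1, 1]

theorem bd5_eq_diagonal_torusWeights :
    bd5 !![Complex.I, 0; 0, -Complex.I] (-1) 1 = diagonal torusWeights := by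
  ext i j; fin_cases i <;> fin_cases j <;> simp [bd5]

theorem diagonal_I_neg_I_mem_SU2 : !![Complex.I, 0; 0, -Complex.I] ∈ SU2 := by
  refine ⟨?_, by simp [det_fin_two]⟩
  ext i j
  fin_cases i <;> fin_cases j <;> simp [mul_apply, Fin.sum_univ_two, conjTranspose_apply]

theorem neg_one_mem_SU2 : (-1 : Mat2) ∈ SU2 := ⟨by simp, by simp [det_fin_two]⟩

theorem torusWeights_mul_eq_one {i j : Fin 5} (hij : i < j)
    (h : torusWeights i * torusWeights j = 1) : (i = 0 ∧ j = 1) ∨ (i = 2 ∧ j = 3) := by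
  fin_cases i <;> fin_cases j <;> revert hij h <;> norm_num [Complex.ext_iff, Fin.ext_iff]

theorem mem_spanWedge_of_extAct_diagonal_eq_self {w : EA} (hw : w ∈ ⋀[ℂ]^2 (Fin 5 → ℂ))
    (hfix : extAct (diagonal torusWeights) w = w) : w ∈ spanWedge := by
  have hf : ∀ i, (diagonal torusWeights).mulVecLin (Pi.basisFun ℂ (Fin 5) i) =
      torusWeights i • Pi.basisFun ℂ (Fin 5) i := by
    intro i; ext k; simp [Pi.single_apply]
  have hx : exteriorPower.map 2 (diagonal torusWeights).mulVecLin ⟨w, hw⟩ = ⟨w, hw⟩ :=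
    Subtype.ext ((coe_map_apply _ _).trans hfix)
  have hspan := wedgeBasis.mem_span_image_of_apply_eq_self
    (map_basis_of_apply_eq_smul _ hf) hx
  suffices h : Submodule.span ℂ (wedgeBasis '' {s | ∏ i ∈ s.val, torusWeights i = 1}) ≤
      spanWedge.comap (⋀[ℂ]^2 (Fin 5 → ℂ)).subtype from h hspan
  rw [Submodule.span_le]
  rintro _ ⟨s, hs, rfl⟩
  obtain ⟨i, j, hij, rfl⟩ := exists_eq_ofCard_pair s
  rw [Set.mem_ofPred_eq, val_ofCard, Finset.prod_pair hij.ne] at hs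
  rcases torusWeights_mul_eq_one hij hs with ⟨rfl, rfl⟩ | ⟨rfl, rfl⟩
  all_goals
    refine Submodule.subset_span ?_
    rw [Submodule.subtype_apply, coe_wedgeBasis_ofCard_pair hij]
    simp

theorem linearIndependent_wedge_eV :
    LinearIndependent ℂ ![wedge (eV 0) (eV 1), wedge (eV 2) (eV 3)] := by
  have h₀₁ : (0 : Fin 5) < 1 := by decide
  have h₂₃ : (2 : Fin 5) < 3 := by decide
  set s := ![ofCard (Finset.card_pair h₀₁.ne), ofCard (Finset.card_pair h₂₃.ne)]
  have hs : Function.Injective s := injective_pair_iff_ne.mpr (by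
    rw [Ne, Subtype.ext_iff, val_ofCard, val_ofCard]; decide)
  have hw : ![wedge (eV 0) (eV 1), wedge (eV 2) (eV 3)] =
      (⋀[ℂ]^2 (Fin 5 → ℂ)).subtype ∘ wedgeBasis ∘ s := by
    ext k : 1
    fin_cases k
    · exact (coe_wedgeBasis_ofCard_pair h₀₁).symm
    · exact (coe_wedgeBasis_ofCard_pair h₂₃).symm
  rw [hw]
  exact (wedgeBasis.linearIndependent.comp s hs).map' _ (Submodule.ker_subtype _)

theorem eq_zero_of_mem_spanWedge_of_extAct_g5_eq_self {w : EA} (hw : w ∈ spanWedge)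
    (hg : extAct g5 w = w) : w = 0 := by
  obtain ⟨a, b, rfl⟩ := Submodule.mem_span_pair.mp hw
  rw [map_add, map_smul, map_smul, extAct_g5_wedge_eV_zero_one,
    extAct_g5_wedge_eV_two_three] at hg
  have h : (b - a) • wedge (eV 0) (eV 1) + (-a - b) • wedge (eV 2) (eV 3) = 0 := by
    rw [← sub_eq_zero.mpr hg]; module
  obtain ⟨hab, hab'⟩ := LinearIndependent.pair_iff.mp linearIndependent_wedge_eV _ _ h
  obtain rfl : a = 0 := by linear_combination (-hab - hab') / 2
  obtain rfl : b = 0 := by linear_combination hab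
  simp

theorem K₀_fixed_eq_spanWedge :
    {w : EA | w ∈ ⋀[ℂ]^2 (Fin 5 → ℂ) ∧ ∀ (A B : Mat2) (c : ℂ), A ∈ SU2 → B ∈ SU2 → ‖c‖ = 1 →
      extAct (bd5 A B c) w = w} = spanWedge := by
  refine Set.Subset.antisymm (fun w ⟨hw, hfix⟩ => ?_) fun w hw => ⟨spanWedge_le_exteriorPower hw,
    fun A B c hA hB _ => extAct_bd5_eq_self_of_mem_spanWedge c hA.2 hB.2 hw⟩
  refine mem_spanWedge_of_extAct_diagonal_eq_self hw ?_
  rw [← bd5_eq_diagonal_torusWeights]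
  exact hfix _ _ 1 diagonal_I_neg_I_mem_SU2 neg_one_mem_SU2 norm_one

theorem statement8 :
    ({w : EA | w ∈ ⋀[ℂ]^2 (Fin 5 → ℂ) ∧
        ∀ (A B : Mat2) (c : ℂ), A ∈ SU2 → B ∈ SU2 → ‖c‖ = 1 →
          extAct (bd5 A B c) w = w}
      = ↑(Submodule.span ℂ {wedge (eV 0) (eV 1), wedge (eV 2) (eV 3)})) ∧
    Module.finrank ℂ ↥(Submodule.span ℂ {wedge (eV 0) (eV 1), wedge (eV 2) (eV 3)}) = 2 ∧
    extAct g5 (wedge (eV 0) (eV 1)) = -wedge (eV 2) (eV 3) ∧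
    extAct g5 (wedge (eV 2) (eV 3)) = wedge (eV 0) (eV 1) ∧
    ({w : EA | w ∈ ⋀[ℂ]^2 (Fin 5 → ℂ) ∧
        (∀ (A B : Mat2) (c : ℂ), A ∈ SU2 → B ∈ SU2 → ‖c‖ = 1 →
          extAct (bd5 A B c) w = w) ∧ extAct g5 w = w}
      = {0}) := by
  refine ⟨K₀_fixed_eq_spanWedge, ?_, extAct_g5_wedge_eV_zero_one, extAct_g5_wedge_eV_two_three, ?_⟩
  · rw [← range_cons_cons_empty, finrank_span_eq_card linearIndependent_wedge_eV, Fintype.card_fin]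
  · refine Set.eq_singleton_iff_unique_mem.mpr ⟨⟨zero_mem _, fun _ _ _ _ _ _ => map_zero _,
      map_zero _⟩, fun w ⟨hw, hfix, hg⟩ => ?_⟩
    exact eq_zero_of_mem_spanWedge_of_extAct_g5_eq_self (K₀_fixed_eq_spanWedge.subset ⟨hw, hfix⟩) hg
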